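/- (Convergence of the tessarine-valued multistate Hopfield network.) Identify tessarines with pairs (u,v) ∈ ℂ² endowed with the product (u₁,v₁)·(u₂,v₂) = (u₁u₂ + v₁v₂, u₁v₂ + v₁u₂) and the involution τ(u,v) = (conj u, conj v). Let K ≥ 2 be an integer, let S_K ⊂ ℂ be the K-th roots of unity, let D_K = { z ∈ ℂ : z ≠ 0 and ∃ u ∈ S_K with |arg(z · conj u)| < π/K }, and for z ∈ D_K let csgn(z) be that unique u. Set S_T = { (u,v) : u, v ∈ S_K }, D_T = { (u,v) : u, v ∈ D_K }, and tsgn(u,v) = (csgn u, csgn v). Let N ≥ 1 and let (w_ij) be an N×N matrix of tessarines with w_ij = τ(w_ji) for all i, j, and with each diagonal entry w_ii = (r_ii, 0) where r_ii is a nonnegative real number. Then for every update schedule σ : ℕ → {1,…,N} and every initial state x(0) ∈ (S_T)^N, the asynchronous trajectory defined by x_i(t+1) = tsgn(v_i(t)) if i = σ(t) and v_i(t) ∈ D_T, and x_i(t+1) = x_i(t) otherwise, where v_i(t) = Σⱼ w_ij · x_j(t) (sum and product of tessarines), is eventually constant: there exists T such that x(t) = x(T) for all t ≥ T. -/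

import Mathlib

/-- Multiplication of tessarines represented as pairs `(u, v) ∈ ℂ²`,
i.e. `u + v𝐣` with `𝐣² = +1` and `𝐣` commuting with `𝐢`. -/
def tessMul (p q : ℂ × ℂ) : ℂ × ℂ :=
  (p.1 * q.1 + p.2 * q.2, p.1 * q.2 + p.2 * q.1)

/-- The reverse-involution on tessarines: componentwise complex conjugation. -/
def tessTau (p : ℂ × ℂ) : ℂ × ℂ :=
  ((starRingEnd ℂ) p.1, (starRingEnd ℂ) p.2)

/-!
The energy `E(x) = ∑ᵢ Re ⟨xᵢ, vᵢ⟩`, with `⟨p, q⟩ = conj p.1 * q.1 + conj p.2 * q.2` and `vᵢ`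
the activation potential, is a Lyapunov function. Since `w` is `τ`-Hermitian, moving neuron `i`
from `a` to `b` changes `E` by `2 Re ⟨b - a, vᵢ⟩ + rᵢᵢ ‖b - a‖²`, and `Re ⟨b - a, vᵢ⟩ > 0`
when `b = tsgn vᵢ ≠ a`, because `csgn z` is the unique `K`-th root of unity maximising
`Re (conj u * z)`. On the finite state space `E` takes finitely many values, so it can increase
only finitely often.
-/

open Complex ComplexConjugate

noncomputable def tessInner (p q : ℂ × ℂ) : ℝ :=
  (conj p.1 * q.1 + conj p.2 * q.2).re

lemma tessInner_add_left (p p' q : ℂ × ℂ) :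
    tessInner (p + p') q = tessInner p q + tessInner p' q := by
  simp only [tessInner, Prod.fst_add, Prod.snd_add, map_add, add_mul, add_re]
  ring

lemma tessInner_add_right (p q q' : ℂ × ℂ) :
    tessInner p (q + q') = tessInner p q + tessInner p q' := by
  simp only [tessInner, Prod.fst_add, Prod.snd_add, mul_add, add_re]
  ring

lemma tessInner_zero_left (q : ℂ × ℂ) : tessInner 0 q = 0 := by
  simp [tessInner]

lemma tessInner_sum_right {ι : Type*} (p : ℂ × ℂ) (s : Finset ι) (f : ι → ℂ × ℂ) :
    tessInner p (∑ j ∈ s, f j) = ∑ j ∈ s, tessInner p (f j) := by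
  simp only [tessInner, Prod.fst_sum, Prod.snd_sum, Finset.mul_sum, ← Finset.sum_add_distrib,
    re_sum]

lemma tessMul_add_right (m q q' : ℂ × ℂ) :
    tessMul m (q + q') = tessMul m q + tessMul m q' := by
  simp only [tessMul, Prod.fst_add, Prod.snd_add, Prod.mk_add_mk]
  ext <;> ring

lemma tessMul_zero_right (m : ℂ × ℂ) : tessMul m 0 = 0 := by
  simp [tessMul]

lemma tessInner_tessMul (m p q : ℂ × ℂ) :
    tessInner p (tessMul m q) = tessInner q (tessMul (tessTau m) p) := by
  simp only [tessInner, tessMul, tessTau, add_re, add_im, mul_re, mul_im, conj_re, conj_im]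
  ring

lemma tessInner_tessMul_ofReal_self (r : ℝ) (p : ℂ × ℂ) :
    tessInner p (tessMul ((r : ℂ), 0) p) = r * (normSq p.1 + normSq p.2) := by
  simp only [tessInner, tessMul, normSq_apply, zero_mul, add_zero, add_re, mul_re, mul_im,
    conj_re, conj_im, ofReal_re, ofReal_im]
  ring

lemma sum_apply_single {ι M N : Type*} [Fintype ι] [DecidableEq ι] [AddCommMonoid M] [Zero N]
    (f : ι → N → M) (hf : ∀ k, f k 0 = 0) (i : ι) (a : N) :
    ∑ k, f k ((Pi.single i a : ι → N) k) = f i a := by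
  rw [Fintype.sum_eq_single i fun k hk => by rw [Pi.single_eq_of_ne hk, hf], Pi.single_eq_same]

section Energy

variable {ι : Type*} [Fintype ι] (w : ι → ι → ℂ × ℂ)

/-- The activation potential `vᵢ` of the paper. -/
def localField (y : ι → ℂ × ℂ) (i : ι) : ℂ × ℂ :=
  ∑ j, tessMul (w i j) (y j)

noncomputable def hopfieldEnergy (y : ι → ℂ × ℂ) : ℝ :=
  ∑ i, tessInner (y i) (localField w y i)

lemma localField_add (y d : ι → ℂ × ℂ) (i : ι) :
    localField w (y + d) i = localField w y i + localField w d i := by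
  simp only [localField, Pi.add_apply, tessMul_add_right, Finset.sum_add_distrib]

variable {w}

lemma sum_tessInner_localField_comm (hsym : ∀ i j, w i j = tessTau (w j i))
    (y d : ι → ℂ × ℂ) :
    ∑ i, tessInner (y i) (localField w d i) = ∑ i, tessInner (d i) (localField w y i) := by
  simp only [localField, tessInner_sum_right]
  rw [Finset.sum_comm]
  refine Finset.sum_congr rfl fun i _ => Finset.sum_congr rfl fun j _ => ?_
  rw [tessInner_tessMul, ← hsym]

lemma hopfieldEnergy_add (hsym : ∀ i j, w i j = tessTau (w j i)) (y d : ι → ℂ × ℂ) :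
    hopfieldEnergy w (y + d) =
      hopfieldEnergy w y + 2 * ∑ i, tessInner (d i) (localField w y i) + hopfieldEnergy w d := by
  have hcross := sum_tessInner_localField_comm hsym y d
  simp only [hopfieldEnergy, localField_add, Pi.add_apply, tessInner_add_left,
    tessInner_add_right, Finset.sum_add_distrib] at hcross ⊢
  rw [hcross]
  ring

variable [DecidableEq ι]

lemma localField_single (δ : ℂ × ℂ) (i k : ι) :
    localField w (Pi.single i δ) k = tessMul (w k i) δ := by
  rw [localField, Fintype.sum_eq_single i fun j hj => by rw [Pi.single_eq_of_ne hj,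
    tessMul_zero_right], Pi.single_eq_same]

lemma hopfieldEnergy_update (hsym : ∀ i j, w i j = tessTau (w j i)) (y : ι → ℂ × ℂ) (i : ι)
    (b : ℂ × ℂ) :
    hopfieldEnergy w (Function.update y i b) = hopfieldEnergy w y
      + 2 * tessInner (b - y i) (localField w y i)
      + tessInner (b - y i) (tessMul (w i i) (b - y i)) := by
  have hupd : Function.update y i b = y + Pi.single i (b - y i) := by
    rw [Pi.update_eq_sub_add_single, Pi.single_sub]
    abel
  have hcross : ∑ k, tessInner ((Pi.single i (b - y i) : ι → ℂ × ℂ) k) (localField w y k)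
      = tessInner (b - y i) (localField w y i) :=
    sum_apply_single (fun k d => tessInner d (localField w y k))
      (fun _ => tessInner_zero_left _) _ _
  have hdiag : hopfieldEnergy w (Pi.single i (b - y i))
      = tessInner (b - y i) (tessMul (w i i) (b - y i)) := by
    rw [hopfieldEnergy, ← localField_single (b - y i) i i]
    exact sum_apply_single (fun k d => tessInner d (localField w (Pi.single i (b - y i)) k))
      (fun _ => tessInner_zero_left _) _ _
  rw [hupd, hopfieldEnergy_add hsym, hcross, hdiag]

end Energy

/-- The set `S_K` of `K`-th roots of unity. -/
def unitRoots (K : ℕ) : Set ℂ :=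
  {u : ℂ | ∃ k : ℕ, k < K ∧ u = exp (2 * Real.pi * I * k / K)}

lemma unitRoots_finite (K : ℕ) : (unitRoots K).Finite := by
  have : unitRoots K = (fun k : ℕ => exp (2 * Real.pi * I * k / K)) '' Set.Iio K := by
    ext u
    simp [unitRoots, eq_comm]
  rw [this]
  exact (Set.finite_Iio K).image _

lemma finite_setOf_forall_mem_unitRoots (K : ℕ) (ι : Type*) [Finite ι] :
    {y : ι → ℂ × ℂ | ∀ i, (y i).1 ∈ unitRoots K ∧ (y i).2 ∈ unitRoots K}.Finite :=
  (Set.Finite.pi fun _ => (unitRoots_finite K).prod (unitRoots_finite K)).subset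
    fun _ hy i _ => hy i

lemma cos_add_two_pi_mul_div_lt {K : ℕ} {k : ℤ} (hk : ¬ (K : ℤ) ∣ k) {θ : ℝ}
    (hθ : |θ| < Real.pi / K) : Real.cos (θ + 2 * Real.pi * k / K) < Real.cos θ := by
  have hK : (0 : ℝ) < K := by
    rcases Nat.eq_zero_or_pos K with h | h
    · simp [h] at hθ
      linarith [abs_nonneg θ]
    · exact_mod_cast h
  set x := Real.pi / K with hx
  have hx0 : 0 < x := div_pos Real.pi_pos hK
  have hπ : Real.pi = K * x := by rw [hx]; field_simp
  set r := k % K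
  have hr0 : r ≠ 0 := fun h => hk (Int.dvd_iff_emod_eq_zero.2 h)
  have hr1 : (1 : ℝ) ≤ r := by
    have := Int.emod_nonneg k (Int.natCast_ne_zero.2 (Nat.cast_pos.1 hK).ne')
    exact_mod_cast (show (1 : ℤ) ≤ r by omega)
  have hrK : (r : ℝ) + 1 ≤ K := by
    have := Int.emod_lt_of_pos k (Int.natCast_pos.2 (Nat.cast_pos.1 hK))
    exact_mod_cast (show r + 1 ≤ K by omega)
  have hθ' := abs_lt.1 hθ
  have hreduce : θ + 2 * Real.pi * k / K = θ + 2 * (r * x) + (k / K : ℤ) * (2 * Real.pi) := by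
    have hdecomp : (k : ℝ) = r + K * (k / K : ℤ) := by
      exact_mod_cast (Int.emod_add_mul_ediv k K).symm
    rw [hdecomp, hx]
    field_simp
    ring
  rw [hreduce, Real.cos_add_int_mul_two_pi, ← sub_pos, Real.cos_sub_cos,
    show (θ + (θ + 2 * (r * x))) / 2 = θ + r * x by ring,
    show (θ - (θ + 2 * (r * x))) / 2 = -(r * x) by ring, Real.sin_neg]
  have hsin₁ : 0 < Real.sin (θ + r * x) :=
    Real.sin_pos_of_pos_of_lt_pi (by nlinarith) (by nlinarith)
  have hsin₂ : 0 < Real.sin (r * x) :=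
    Real.sin_pos_of_pos_of_lt_pi (by positivity) (by nlinarith)
  nlinarith

lemma re_exp_mul_lt {K : ℕ} {k : ℤ} (hk : ¬ (K : ℤ) ∣ k) {z : ℂ} (hz : z ≠ 0)
    (harg : |arg z| < Real.pi / K) : (exp (2 * Real.pi * I * k / K) * z).re < z.re := by
  have hpolar : exp (2 * Real.pi * I * k / K) * z
      = ‖z‖ * exp ((arg z + 2 * Real.pi * k / K : ℝ) * I) := by
    conv_lhs => rw [← norm_mul_exp_arg_mul_I z]
    rw [mul_left_comm, ← exp_add]
    push_cast
    ring_nf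
  rw [hpolar, re_ofReal_mul, exp_ofReal_mul_I_re, ← norm_mul_cos_arg z]
  exact mul_lt_mul_of_pos_left (cos_add_two_pi_mul_div_lt hk harg) (norm_pos_iff.2 hz)

lemma conj_exp_mul_exp (K m n : ℕ) :
    conj (exp (2 * Real.pi * I * m / K)) * exp (2 * Real.pi * I * n / K)
      = exp (2 * Real.pi * I * ((n - m : ℤ) : ℂ) / K) := by
  rw [← exp_conj, ← exp_add]
  congr 1
  simp only [map_div₀, map_mul, map_ofNat, conj_ofReal, conj_I, map_natCast, Int.cast_sub,
    Int.cast_natCast]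
  ring

/-- Here `b = csgn v`, which thus strictly maximises `u ↦ Re (conj u * v)` on `S_K`. -/
lemma re_conj_mul_lt_of_mem_unitRoots {K : ℕ} {a b v : ℂ} (ha : a ∈ unitRoots K)
    (hb : b ∈ unitRoots K) (hab : a ≠ b) (hv : v ≠ 0)
    (harg : |arg (v * conj b)| < Real.pi / K) : (conj a * v).re < (conj b * v).re := by
  obtain ⟨m, hm, rfl⟩ := ha
  obtain ⟨n, hn, rfl⟩ := hb
  have hK : ¬ (K : ℤ) ∣ (n - m : ℤ) := fun hdvd => hab <| by
    have := Int.eq_zero_of_abs_lt_dvd hdvd (abs_sub_lt_iff.2 ⟨by omega, by omega⟩)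
    rw [show m = n by omega]
  have hbb := conj_exp_mul_exp K n n
  rw [sub_self, Int.cast_zero, mul_zero, zero_div, exp_zero] at hbb
  have hz : v * conj (exp (2 * Real.pi * I * n / K)) ≠ 0 :=
    mul_ne_zero hv ((map_ne_zero _).2 (exp_ne_zero _))
  calc (conj (exp (2 * Real.pi * I * m / K)) * v).re
      = (exp (2 * Real.pi * I * ((n - m : ℤ) : ℂ) / K)
          * (v * conj (exp (2 * Real.pi * I * n / K)))).re := by
        rw [← conj_exp_mul_exp]
        congr 1
        linear_combination (-(starRingEnd ℂ (exp (2 * Real.pi * I * m / K)) * v)) * hbb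
    _ < (v * conj (exp (2 * Real.pi * I * n / K))).re := re_exp_mul_lt hK hz harg
    _ = (conj (exp (2 * Real.pi * I * n / K)) * v).re := by rw [mul_comm]

lemma re_conj_mul_le_of_mem_unitRoots {K : ℕ} {a b v : ℂ} (ha : a ∈ unitRoots K)
    (hb : b ∈ unitRoots K) (hv : v ≠ 0) (harg : |arg (v * conj b)| < Real.pi / K) :
    (conj a * v).re ≤ (conj b * v).re := by
  rcases eq_or_ne a b with rfl | hab
  · exact le_rfl
  · exact (re_conj_mul_lt_of_mem_unitRoots ha hb hab hv harg).le

lemma tessInner_sub_pos {K : ℕ} {a b v : ℂ × ℂ}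
    (ha : a.1 ∈ unitRoots K ∧ a.2 ∈ unitRoots K) (hb : b.1 ∈ unitRoots K ∧ b.2 ∈ unitRoots K)
    (hab : a ≠ b) (hv₁ : v.1 ≠ 0) (hv₂ : v.2 ≠ 0)
    (harg₁ : |arg (v.1 * conj b.1)| < Real.pi / K) (harg₂ : |arg (v.2 * conj b.2)| < Real.pi / K) :
    0 < tessInner (b - a) v := by
  have hsplit : tessInner (b - a) v = ((conj b.1 * v.1).re - (conj a.1 * v.1).re)
      + ((conj b.2 * v.2).re - (conj a.2 * v.2).re) := by
    simp only [tessInner, Prod.fst_sub, Prod.snd_sub, map_sub, sub_mul, add_re, sub_re]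
  have hle₁ := re_conj_mul_le_of_mem_unitRoots ha.1 hb.1 hv₁ harg₁
  have hle₂ := re_conj_mul_le_of_mem_unitRoots ha.2 hb.2 hv₂ harg₂
  rw [hsplit]
  rcases not_and_or.1 (mt Prod.ext_iff.2 hab) with h | h
  · linarith [re_conj_mul_lt_of_mem_unitRoots ha.1 hb.1 h hv₁ harg₁]
  · linarith [re_conj_mul_lt_of_mem_unitRoots ha.2 hb.2 h hv₂ harg₂]

lemma hopfieldEnergy_lt_update {ι : Type*} [Fintype ι] [DecidableEq ι] {K : ℕ}
    {w : ι → ι → ℂ × ℂ} (hsym : ∀ i j, w i j = tessTau (w j i)) {y : ι → ℂ × ℂ} {i : ι}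
    (hdiag : ∃ r : ℝ, 0 ≤ r ∧ w i i = ((r : ℂ), (0 : ℂ))) {b : ℂ × ℂ}
    (hy : (y i).1 ∈ unitRoots K ∧ (y i).2 ∈ unitRoots K)
    (hb : b.1 ∈ unitRoots K ∧ b.2 ∈ unitRoots K) (hne : y i ≠ b)
    (hv₁ : (localField w y i).1 ≠ 0) (hv₂ : (localField w y i).2 ≠ 0)
    (harg₁ : |arg ((localField w y i).1 * conj b.1)| < Real.pi / K)
    (harg₂ : |arg ((localField w y i).2 * conj b.2)| < Real.pi / K) :
    hopfieldEnergy w y < hopfieldEnergy w (Function.update y i b) := by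
  obtain ⟨r, hr, hwii⟩ := hdiag
  have hgain := tessInner_sub_pos hy hb hne hv₁ hv₂ harg₁ harg₂
  have hself : 0 ≤ tessInner (b - y i) (tessMul (w i i) (b - y i)) := by
    rw [hwii, tessInner_tessMul_ofReal_self]
    exact mul_nonneg hr (add_nonneg (normSq_nonneg _) (normSq_nonneg _))
  rw [hopfieldEnergy_update hsym]
  linarith

lemma exists_forall_ge_eq_of_finite_range {α β : Type*} [LinearOrder β] {x : ℕ → α}
    (hfin : (Set.range x).Finite) (E : α → β)
    (hstep : ∀ t, x (t + 1) = x t ∨ E (x t) < E (x (t + 1))) :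
    ∃ T, ∀ t, T ≤ t → x t = x T := by
  have hmono : Monotone (E ∘ x) :=
    monotone_nat_of_le_succ fun t => (hstep t).elim (fun h => (congrArg E h).ge) le_of_lt
  obtain ⟨_, ⟨T, rfl⟩, hmax⟩ := Set.exists_max_image _ E hfin (Set.range_nonempty x)
  refine ⟨T, fun t ht => ?_⟩
  induction t, ht using Nat.le_induction with
  | base => rfl
  | succ t ht ih =>
    rcases hstep t with h | h
    · rw [h, ih]
    · exact absurd (hmax _ ⟨t + 1, rfl⟩) (not_le.2 ((hmono ht).trans_lt h))

theorem tessarine_multistate_hopfield_convergence_general (K : ℕ)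
    (SK : Set ℂ)
    (hSK : SK = {u : ℂ | ∃ k : ℕ, k < K ∧
      u = Complex.exp (2 * Real.pi * Complex.I * k / K)})
    (DK : Set ℂ)
    (hDK : DK = {z : ℂ | z ≠ 0 ∧ ∃ u ∈ SK,
      |(z * (starRingEnd ℂ) u).arg| < Real.pi / K})
    (N : ℕ)
    (w : Fin N → Fin N → ℂ × ℂ)
    (hsym : ∀ i j, w i j = tessTau (w j i))
    (hdiag : ∀ i, ∃ r : ℝ, 0 ≤ r ∧ w i i = ((r : ℂ), (0 : ℂ)))
    (σ : ℕ → Fin N) (x : ℕ → Fin N → ℂ × ℂ)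
    (hx0 : ∀ i, (x 0 i).1 ∈ SK ∧ (x 0 i).2 ∈ SK)
    (hdyn : ∀ t i,
      ((i = σ t ∧ (∑ j, tessMul (w i j) (x t j)).1 ∈ DK ∧
          (∑ j, tessMul (w i j) (x t j)).2 ∈ DK) →
        ((x (t + 1) i).1 ∈ SK ∧
          |((∑ j, tessMul (w i j) (x t j)).1 *
            (starRingEnd ℂ) ((x (t + 1) i).1)).arg| < Real.pi / K) ∧
        ((x (t + 1) i).2 ∈ SK ∧
          |((∑ j, tessMul (w i j) (x t j)).2 *
            (starRingEnd ℂ) ((x (t + 1) i).2)).arg| < Real.pi / K)) ∧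
      (¬(i = σ t ∧ (∑ j, tessMul (w i j) (x t j)).1 ∈ DK ∧
          (∑ j, tessMul (w i j) (x t j)).2 ∈ DK) →
        x (t + 1) i = x t i)) :
    ∃ T, ∀ t, T ≤ t → x t = x T := by
  subst hSK
  have hDK₀ : ∀ z ∈ DK, z ≠ 0 := hDK ▸ fun _ hz => hz.1
  have hstates : ∀ t i, (x t i).1 ∈ unitRoots K ∧ (x t i).2 ∈ unitRoots K := by
    intro t
    induction t with
    | zero => exact hx0
    | succ t ih =>
      intro i
      by_cases hact : i = σ t ∧ (localField w (x t) i).1 ∈ DK ∧ (localField w (x t) i).2 ∈ DK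
      · exact ⟨((hdyn t i).1 hact).1.1, ((hdyn t i).1 hact).2.1⟩
      · exact (hdyn t i).2 hact ▸ ih i
  have hupd : ∀ t, x (t + 1) = Function.update (x t) (σ t) (x (t + 1) (σ t)) := fun t =>
    funext fun i => by
      rcases eq_or_ne i (σ t) with rfl | hi
      · rw [Function.update_self]
      · rw [Function.update_of_ne hi, (hdyn t i).2 fun h => hi h.1]
  refine exists_forall_ge_eq_of_finite_range
    ((finite_setOf_forall_mem_unitRoots K (Fin N)).subset (Set.range_subset_iff.2 hstates))
    (hopfieldEnergy w) fun t => ?_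
  by_cases hact : (localField w (x t) (σ t)).1 ∈ DK ∧ (localField w (x t) (σ t)).2 ∈ DK
  · obtain ⟨⟨hb₁, harg₁⟩, hb₂, harg₂⟩ := (hdyn t (σ t)).1 ⟨rfl, hact⟩
    rcases eq_or_ne (x t (σ t)) (x (t + 1) (σ t)) with hsame | hne
    · exact .inl (by rw [hupd t, ← hsame, Function.update_eq_self])
    · rw [hupd t]
      exact .inr (hopfieldEnergy_lt_update hsym (hdiag _) (hstates t _) ⟨hb₁, hb₂⟩ hne
        (hDK₀ _ hact.1) (hDK₀ _ hact.2) harg₁ harg₂)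
  · exact .inl (funext fun i => (hdyn t i).2 fun h => hact (h.1 ▸ h.2))

theorem tessarine_multistate_hopfield_convergence (K : ℕ) (hK : 2 ≤ K)
    (SK : Set ℂ)
    (hSK : SK = {u : ℂ | ∃ k : ℕ, k < K ∧
      u = Complex.exp (2 * Real.pi * Complex.I * k / K)})
    (DK : Set ℂ)
    (hDK : DK = {z : ℂ | z ≠ 0 ∧ ∃ u ∈ SK,
      |(z * (starRingEnd ℂ) u).arg| < Real.pi / K})
    (N : ℕ) (hN : 1 ≤ N)
    (w : Fin N → Fin N → ℂ × ℂ)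
    (hsym : ∀ i j, w i j = tessTau (w j i))
    (hdiag : ∀ i, ∃ r : ℝ, 0 ≤ r ∧ w i i = ((r : ℂ), (0 : ℂ)))
    (σ : ℕ → Fin N) (x : ℕ → Fin N → ℂ × ℂ)
    (hx0 : ∀ i, (x 0 i).1 ∈ SK ∧ (x 0 i).2 ∈ SK)
    (hdyn : ∀ t i,
      ((i = σ t ∧ (∑ j, tessMul (w i j) (x t j)).1 ∈ DK ∧
          (∑ j, tessMul (w i j) (x t j)).2 ∈ DK) →
        ((x (t + 1) i).1 ∈ SK ∧
          |((∑ j, tessMul (w i j) (x t j)).1 *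
            (starRingEnd ℂ) ((x (t + 1) i).1)).arg| < Real.pi / K) ∧
        ((x (t + 1) i).2 ∈ SK ∧
          |((∑ j, tessMul (w i j) (x t j)).2 *
            (starRingEnd ℂ) ((x (t + 1) i).2)).arg| < Real.pi / K)) ∧
      (¬(i = σ t ∧ (∑ j, tessMul (w i j) (x t j)).1 ∈ DK ∧
          (∑ j, tessMul (w i j) (x t j)).2 ∈ DK) →
        x (t + 1) i = x t i)) :
    ∃ T, ∀ t, T ≤ t → x t = x T :=
  tessarine_multistate_hopfield_convergence_general K SK hSK DK hDK N w hsym hdiag σ x hx0 hdyn
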